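/- (Lemma 2.5.) Assume (A.1) and (V.1). Let u be a smooth classical solution of u_tt − u_xx + V(x)u + a(x)u_t = 0 with smooth compactly supported initial data (u₀, u₁), vanishing for |x| ≥ R on each time interval [0,T]. Then for every t ≥ 0: (1/2)‖u(t,·)‖²_{L²} + ∫₀ᵗ ∫_ℝ a(x) u(s,x)² dx ds ≤ (1/2)‖u₀‖²_{L²} + ∫_ℝ (u₁(x) + a(x)u₀(x))² / V(x) dx. In particular, ‖u(t,·)‖²_{L²} + ∫₀ᵗ ∫_ℝ a(x)|u(s,x)|² dx ds ≤ C ( ‖u₀‖²_{L²} + ∫_ℝ |u₁(x) + a(x)u₀(x)|² / V(x) dx ) with C = 2. -/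

import Mathlib

/-
The time primitive `y(t) = ∫₀ᵗ u` solves the forced equation
`y_tt − y_xx + V y + a y_t = u₁ + a u₀` with `y(0) = 0`, `y_t(0) = u₀`. Multiplying by `y_t = u`
and integrating over `[0, t] × ℝ` gives the energy identity
`½‖u(t)‖² + ½‖y_x(t)‖² + ∫ (½ V y(t)² − (u₁ + a u₀) y(t)) + ∫₀ᵗ∫ a u² = ½‖u₀‖²`,
and completing the square, `(u₁ + a u₀) y − ½ V y² ≤ (u₁ + a u₀)² / (2 V)`, yields the bound.
To avoid differentiating under the integral sign, `y_x` is replaced by the time primitive of `u_x`,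
and the spatial integration by parts is done after exchanging the order of integration.
-/

open MeasureTheory

noncomputable def ut (u : ℝ → ℝ → ℝ) (t x : ℝ) : ℝ := deriv (fun s => u s x) t

noncomputable def ux (u : ℝ → ℝ → ℝ) (t x : ℝ) : ℝ := deriv (fun y => u t y) x

noncomputable def utt (u : ℝ → ℝ → ℝ) (t x : ℝ) : ℝ := deriv (fun s => ut u s x) t

noncomputable def uxx (u : ℝ → ℝ → ℝ) (t x : ℝ) : ℝ := deriv (fun y => ux u t y) x

noncomputable def Eu (V : ℝ → ℝ) (u : ℝ → ℝ → ℝ) (t : ℝ) : ℝ :=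
  (1/2) * ((∫ x, (ut u t x)^2) + (∫ x, (ux u t x)^2) + ∫ x, V x * (u t x)^2)

/-- `u` is a smooth classical solution of `u_tt - u_xx + V u + a u_t = 0` with smooth
compactly supported initial data `(u₀, u₁)`, vanishing for large `|x|` on each `[0,T]`. -/
def IsSmoothSolution (V a : ℝ → ℝ) (u : ℝ → ℝ → ℝ) (u₀ u₁ : ℝ → ℝ) : Prop :=
  ContDiff ℝ (⊤ : ℕ∞) (fun p : ℝ × ℝ => u p.1 p.2) ∧
  (∀ t > (0:ℝ), ∀ x : ℝ, utt u t x - uxx u t x + V x * u t x + a x * ut u t x = 0) ∧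
  (∀ x : ℝ, u 0 x = u₀ x) ∧ (∀ x : ℝ, ut u 0 x = u₁ x) ∧
  ContDiff ℝ (⊤ : ℕ∞) u₀ ∧ HasCompactSupport u₀ ∧
  ContDiff ℝ (⊤ : ℕ∞) u₁ ∧ HasCompactSupport u₁ ∧
  (∀ T > (0:ℝ), ∃ R > (0:ℝ), ∀ t ∈ Set.Icc (0:ℝ) T, ∀ x : ℝ, R ≤ |x| → u t x = 0)

open Set Function

section PartialDerivatives

variable {u : ℝ → ℝ → ℝ} {t x : ℝ}

theorem hasDerivAt_fderiv_fst (hu : DifferentiableAt ℝ ↿u (t, x)) :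
    HasDerivAt (fun s => u s x) (fderiv ℝ ↿u (t, x) (1, 0)) t :=
  hu.hasFDerivAt.comp_hasDerivAt (f := fun s => (s, x)) t
    ((hasDerivAt_id t).prodMk (hasDerivAt_const t x))

theorem hasDerivAt_fderiv_snd (hu : DifferentiableAt ℝ ↿u (t, x)) :
    HasDerivAt (fun y => u t y) (fderiv ℝ ↿u (t, x) (0, 1)) x :=
  hu.hasFDerivAt.comp_hasDerivAt (f := fun y => (t, y)) x
    ((hasDerivAt_const x t).prodMk (hasDerivAt_id x))

theorem ut_eq_fderiv (hu : DifferentiableAt ℝ ↿u (t, x)) :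
    ut u t x = fderiv ℝ ↿u (t, x) (1, 0) :=
  (hasDerivAt_fderiv_fst hu).deriv

theorem ux_eq_fderiv (hu : DifferentiableAt ℝ ↿u (t, x)) :
    ux u t x = fderiv ℝ ↿u (t, x) (0, 1) :=
  (hasDerivAt_fderiv_snd hu).deriv

theorem hasDerivAt_ut (hu : DifferentiableAt ℝ ↿u (t, x)) :
    HasDerivAt (fun s => u s x) (ut u t x) t :=
  ut_eq_fderiv hu ▸ hasDerivAt_fderiv_fst hu

theorem hasDerivAt_ux (hu : DifferentiableAt ℝ ↿u (t, x)) :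
    HasDerivAt (fun y => u t y) (ux u t x) x :=
  ux_eq_fderiv hu ▸ hasDerivAt_fderiv_snd hu

theorem hasDerivAt_utt (hu : DifferentiableAt ℝ ↿(ut u) (t, x)) :
    HasDerivAt (fun s => ut u s x) (utt u t x) t :=
  hasDerivAt_ut hu

theorem hasDerivAt_uxx (hu : DifferentiableAt ℝ ↿(ux u) (t, x)) :
    HasDerivAt (fun y => ux u t y) (uxx u t x) x :=
  hasDerivAt_ux hu

variable {m n : WithTop ℕ∞}

theorem contDiff_ut (hu : ContDiff ℝ n ↿u) (hmn : m + 1 ≤ n) : ContDiff ℝ m ↿(ut u) := by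
  have hdiff : Differentiable ℝ ↿u := hu.differentiable fun hn => by simp [hn] at hmn
  have : ↿(ut u) = fun p => fderiv ℝ ↿u p (1, 0) := funext fun p => ut_eq_fderiv (hdiff p)
  rw [this]
  exact (hu.fderiv_right hmn).clm_apply contDiff_const

theorem contDiff_ux (hu : ContDiff ℝ n ↿u) (hmn : m + 1 ≤ n) : ContDiff ℝ m ↿(ux u) := by
  have hdiff : Differentiable ℝ ↿u := hu.differentiable fun hn => by simp [hn] at hmn
  have : ↿(ux u) = fun p => fderiv ℝ ↿u p (0, 1) := funext fun p => ux_eq_fderiv (hdiff p)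
  rw [this]
  exact (hu.fderiv_right hmn).clm_apply contDiff_const

theorem continuous_partials (hu : ContDiff ℝ 2 ↿u) :
    Continuous ↿u ∧ Continuous ↿(ut u) ∧ Continuous ↿(ux u) ∧ Continuous ↿(utt u) ∧
      Continuous ↿(uxx u) :=
  ⟨hu.continuous, (contDiff_ut hu (by norm_num) : ContDiff ℝ 1 _).continuous,
    (contDiff_ux hu (by norm_num) : ContDiff ℝ 1 _).continuous,
    (contDiff_ut (m := 0) (contDiff_ut hu (by norm_num) : ContDiff ℝ 1 _) (by norm_num)).continuous,
    (contDiff_ux (m := 0) (contDiff_ux hu (by norm_num) : ContDiff ℝ 1 _) (by norm_num)).continuous⟩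

end PartialDerivatives

noncomputable def timePrimitive (g : ℝ → ℝ → ℝ) (s x : ℝ) : ℝ := ∫ σ in (0 : ℝ)..s, g σ x

section TimePrimitive

variable {g : ℝ → ℝ → ℝ}

@[simp]
theorem timePrimitive_zero (x : ℝ) : timePrimitive g 0 x = 0 :=
  intervalIntegral.integral_same

theorem continuous_timePrimitive (hg : Continuous ↿g) : Continuous ↿(timePrimitive g) :=
  intervalIntegral.continuous_parametric_intervalIntegral_of_continuous (f := fun p σ => g σ p.2)
    (by fun_prop) continuous_fst

theorem hasDerivAt_timePrimitive (hg : Continuous ↿g) (s x : ℝ) :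
    HasDerivAt (fun τ => timePrimitive g τ x) (g s x) s :=
  ((hg.uncurry_right x).integral_hasStrictDerivAt 0 s).hasDerivAt

end TimePrimitive

theorem intervalIntegral_intervalIntegral_swap_of_continuous {E : Type*} [NormedAddCommGroup E]
    [NormedSpace ℝ E] {F : ℝ → ℝ → E} (hF : Continuous ↿F) (a b c d : ℝ) :
    ∫ s in a..b, ∫ x in c..d, F s x = ∫ x in c..d, ∫ s in a..b, F s x :=
  intervalIntegral_intervalIntegral_swap
    ((hF.continuousOn.integrableOn_compact (isCompact_uIcc.prod isCompact_uIcc)).mono_set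
      (prod_mono uIoc_subset_uIcc uIoc_subset_uIcc))

theorem mul_sub_half_mul_sq_le {v : ℝ} (hv : 0 < v) (f y : ℝ) :
    f * y - v * y ^ 2 / 2 ≤ f ^ 2 / v / 2 := by
  rw [div_div, le_div_iff₀ (by positivity)]
  nlinarith [sq_nonneg (f - v * y)]

theorem integral_eq_intervalIntegral_of_forall_le_abs {E : Type*} [NormedAddCommGroup E]
    [NormedSpace ℝ E] {g : ℝ → E} {R : ℝ}
    (hg : ∀ x, R ≤ |x| → g x = 0) : ∫ x, g x = ∫ x in -R..R, g x := by
  refine (intervalIntegral.integral_eq_integral_of_support_subset fun x hx => ?_).symm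
  have hxR := abs_lt.1 (not_le.1 (mt (hg x) hx))
  exact ⟨hxR.1, hxR.2.le⟩

section DampedWave

variable {u : ℝ → ℝ → ℝ} {a V : ℝ → ℝ} {c d s t : ℝ}

theorem timePrimitive_dampedWave_eq (hu : ContDiff ℝ 2 ↿u)
    (hPDE : ∀ s ∈ Ioc 0 t, ∀ x, utt u s x - uxx u s x + V x * u s x + a x * ut u s x = 0)
    (hs : s ∈ Icc 0 t) (x : ℝ) :
    ut u s x + a x * u s x + V x * timePrimitive u s x - timePrimitive (uxx u) s x =
      ut u 0 x + a x * u 0 x := by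
  obtain ⟨cu, cut, -, cutt, cuxx⟩ := continuous_partials hu
  have hdiff_ut : Differentiable ℝ ↿(ut u) :=
    (contDiff_ut hu (by norm_num) : ContDiff ℝ 1 _).differentiable one_ne_zero
  have hderiv : ∀ τ, HasDerivAt
      (fun τ => ut u τ x + a x * u τ x + V x * timePrimitive u τ x - timePrimitive (uxx u) τ x)
      (utt u τ x - uxx u τ x + V x * u τ x + a x * ut u τ x) τ := fun τ =>
    ((((hasDerivAt_utt (hdiff_ut (τ, x))).add
      ((hasDerivAt_ut (hu.differentiable two_ne_zero (τ, x))).const_mul (a x))).add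
      ((hasDerivAt_timePrimitive cu τ x).const_mul (V x))).sub
      (hasDerivAt_timePrimitive cuxx τ x)).congr_deriv (by ring)
  have hFTC := intervalIntegral.integral_eq_sub_of_hasDerivAt (fun τ _ => hderiv τ)
    (Continuous.intervalIntegrable (by fun_prop) 0 s)
  rw [intervalIntegral.integral_zero_ae (ae_of_all _ fun τ hτ => by
    rw [uIoc_of_le hs.1] at hτ
    exact hPDE τ ⟨hτ.1, hτ.2.trans hs.2⟩ x)] at hFTC
  simp only [timePrimitive_zero] at hFTC
  linarith

theorem intervalIntegral_mul_timePrimitive_uxx (hu : ContDiff ℝ 2 ↿u) (hc : u s c = 0)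
    (hd : u s d = 0) :
    ∫ x in c..d, u s x * timePrimitive (uxx u) s x =
      -∫ x in c..d, ux u s x * timePrimitive (ux u) s x := by
  obtain ⟨cu, -, cux, -, cuxx⟩ := continuous_partials hu
  have hdiff_ux : Differentiable ℝ ↿(ux u) :=
    (contDiff_ux hu (by norm_num) : ContDiff ℝ 1 _).differentiable one_ne_zero
  calc ∫ x in c..d, u s x * timePrimitive (uxx u) s x
      = ∫ σ in 0..s, ∫ x in c..d, u s x * uxx u σ x := by
        simp only [timePrimitive, ← intervalIntegral.integral_const_mul]
        exact (intervalIntegral_intervalIntegral_swap_of_continuous (by fun_prop) _ _ _ _).symm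
    _ = ∫ σ in 0..s, -∫ x in c..d, ux u s x * ux u σ x := by
        refine intervalIntegral.integral_congr fun σ _ => ?_
        rw [intervalIntegral.integral_mul_deriv_eq_deriv_mul
          (fun x _ => hasDerivAt_ux (hu.differentiable two_ne_zero _))
          (fun x _ => hasDerivAt_uxx (hdiff_ux _))
          (Continuous.intervalIntegrable (by fun_prop) _ _)
          (Continuous.intervalIntegrable (by fun_prop) _ _), hc, hd]
        ring
    _ = -∫ x in c..d, ux u s x * timePrimitive (ux u) s x := by
        rw [intervalIntegral.integral_neg,
          intervalIntegral_intervalIntegral_swap_of_continuous (by fun_prop)]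
        simp only [timePrimitive, intervalIntegral.integral_const_mul]

-- The energy of the time primitive `y = timePrimitive u`, with `timePrimitive (ux u)` as `y_x`.
noncomputable def energyDensity (a V : ℝ → ℝ) (u : ℝ → ℝ → ℝ) (s x : ℝ) : ℝ :=
  u s x ^ 2 / 2 + timePrimitive (ux u) s x ^ 2 / 2 +
    (V x * timePrimitive u s x ^ 2 / 2 - (ut u 0 x + a x * u 0 x) * timePrimitive u s x)

@[simp]
theorem energyDensity_zero (x : ℝ) : energyDensity a V u 0 x = u 0 x ^ 2 / 2 := by
  simp [energyDensity]

theorem intervalIntegral_energyDensity_add_damping (hu : ContDiff ℝ 2 ↿u) (ha : Continuous a)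
    (hV : Continuous V) (ht : 0 ≤ t)
    (hPDE : ∀ s ∈ Ioc 0 t, ∀ x, utt u s x - uxx u s x + V x * u s x + a x * ut u s x = 0)
    (hc : ∀ s ∈ Ioc 0 t, u s c = 0) (hd : ∀ s ∈ Ioc 0 t, u s d = 0) :
    ∫ x in c..d, (energyDensity a V u t x + timePrimitive (fun s x => a x * u s x ^ 2) t x) =
      ∫ x in c..d, u 0 x ^ 2 / 2 := by
  obtain ⟨cu, cut, cux, -, cuxx⟩ := continuous_partials hu
  have cy := continuous_timePrimitive cu
  have cz := continuous_timePrimitive cux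
  have cY := continuous_timePrimitive cuxx
  have cw := continuous_timePrimitive (g := fun s x => a x * u s x ^ 2) (by fun_prop)
  have hderiv : ∀ s x, HasDerivAt
      (fun τ => energyDensity a V u τ x + timePrimitive (fun s x => a x * u s x ^ 2) τ x)
      (u s x * (ut u s x + a x * u s x + V x * timePrimitive u s x - (ut u 0 x + a x * u 0 x)) +
        timePrimitive (ux u) s x * ux u s x) s := fun s x => by
    have hus := hasDerivAt_ut (hu.differentiable two_ne_zero (s, x))
    have hy := hasDerivAt_timePrimitive cu s x
    have hz := hasDerivAt_timePrimitive cux s x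
    exact (((((hus.pow 2).div_const 2).add ((hz.pow 2).div_const 2)).add
      ((((hy.pow 2).const_mul (V x)).div_const 2).sub (hy.const_mul _))).add
      (hasDerivAt_timePrimitive (g := fun s x => a x * u s x ^ 2) (by fun_prop) s x)).congr_deriv
      (by ring)
  have hspace : ∀ s ∈ Ioc 0 t, ∫ x in c..d,
      (u s x * (ut u s x + a x * u s x + V x * timePrimitive u s x - (ut u 0 x + a x * u 0 x)) +
        timePrimitive (ux u) s x * ux u s x) = 0 := fun s hs => by
    have hY : ∀ x, ut u s x + a x * u s x + V x * timePrimitive u s x -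
        (ut u 0 x + a x * u 0 x) = timePrimitive (uxx u) s x := fun x => by
      linarith [timePrimitive_dampedWave_eq hu hPDE (Ioc_subset_Icc_self hs) x]
    simp only [hY]
    rw [intervalIntegral.integral_add (Continuous.intervalIntegrable (by fun_prop) _ _)
      (Continuous.intervalIntegrable (by fun_prop) _ _),
      intervalIntegral_mul_timePrimitive_uxx hu (hc s hs) (hd s hs)]
    simp only [mul_comm (ux u s _), neg_add_cancel]
  rw [← sub_eq_zero, ← intervalIntegral.integral_sub (Continuous.intervalIntegrable
    (by unfold energyDensity; fun_prop) _ _) (Continuous.intervalIntegrable (by fun_prop) _ _)]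
  calc ∫ x in c..d, (energyDensity a V u t x + timePrimitive (fun s x => a x * u s x ^ 2) t x -
        u 0 x ^ 2 / 2)
      = ∫ x in c..d, ∫ s in 0..t, (u s x * (ut u s x + a x * u s x + V x * timePrimitive u s x -
          (ut u 0 x + a x * u 0 x)) + timePrimitive (ux u) s x * ux u s x) := by
        refine intervalIntegral.integral_congr fun x _ => ?_
        rw [intervalIntegral.integral_eq_sub_of_hasDerivAt (fun s _ => hderiv s x)
          (Continuous.intervalIntegrable (by fun_prop) _ _)]
        simp
    _ = 0 := by
        rw [← intervalIntegral_intervalIntegral_swap_of_continuous (by fun_prop)]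
        exact intervalIntegral.integral_zero_ae (ae_of_all _ fun s hs =>
          hspace s (uIoc_of_le ht ▸ hs))

theorem intervalIntegral_sq_add_damping_le (hu : ContDiff ℝ 2 ↿u) (ha : Continuous a)
    (hV : Continuous V) (hV_pos : ∀ x, 0 < V x) (ht : 0 ≤ t)
    (hPDE : ∀ s ∈ Ioc 0 t, ∀ x, utt u s x - uxx u s x + V x * u s x + a x * ut u s x = 0)
    (hc : ∀ s ∈ Ioc 0 t, u s c = 0) (hd : ∀ s ∈ Ioc 0 t, u s d = 0) (hcd : c ≤ d) :
    (1 / 2) * (∫ x in c..d, u t x ^ 2) +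
        ∫ x in c..d, timePrimitive (fun s x => a x * u s x ^ 2) t x ≤
      (1 / 2) * (∫ x in c..d, u 0 x ^ 2) +
        (1 / 2) * ∫ x in c..d, (ut u 0 x + a x * u 0 x) ^ 2 / V x := by
  obtain ⟨cu, cut, cux, -, -⟩ := continuous_partials hu
  have cy := continuous_timePrimitive cu
  have cz := continuous_timePrimitive cux
  have cw := continuous_timePrimitive (g := fun s x => a x * u s x ^ 2) (by fun_prop)
  have cf : Continuous fun x => (ut u 0 x + a x * u 0 x) ^ 2 / V x :=
    by fun_prop (disch := exact fun x => (hV_pos x).ne')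
  have key : ∫ x in c..d, (u t x ^ 2 / 2 + timePrimitive (fun s x => a x * u s x ^ 2) t x) ≤
      ∫ x in c..d, (u 0 x ^ 2 / 2 + (ut u 0 x + a x * u 0 x) ^ 2 / V x / 2) :=
    calc _ ≤ ∫ x in c..d, (energyDensity a V u t x +
          timePrimitive (fun s x => a x * u s x ^ 2) t x +
          (ut u 0 x + a x * u 0 x) ^ 2 / V x / 2) := by
          refine intervalIntegral.integral_mono_on hcd
            (Continuous.intervalIntegrable (by fun_prop) _ _)
            (Continuous.intervalIntegrable (by unfold energyDensity; fun_prop) _ _) fun x _ => ?_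
          have := mul_sub_half_mul_sq_le (hV_pos x) (ut u 0 x + a x * u 0 x) (timePrimitive u t x)
          have := sq_nonneg (timePrimitive (ux u) t x)
          unfold energyDensity
          linarith
      _ = _ := by
          rw [intervalIntegral.integral_add
              (Continuous.intervalIntegrable (by unfold energyDensity; fun_prop) _ _)
              (Continuous.intervalIntegrable (by fun_prop) _ _),
            intervalIntegral_energyDensity_add_damping hu ha hV ht hPDE hc hd,
            intervalIntegral.integral_add (Continuous.intervalIntegrable (by fun_prop) _ _)
              (Continuous.intervalIntegrable (by fun_prop) _ _)]
  rw [intervalIntegral.integral_add (Continuous.intervalIntegrable (by fun_prop) _ _)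
      (Continuous.intervalIntegrable (by fun_prop) _ _),
    intervalIntegral.integral_add (Continuous.intervalIntegrable (by fun_prop) _ _)
      (Continuous.intervalIntegrable (by fun_prop) _ _),
    intervalIntegral.integral_div, intervalIntegral.integral_div,
    intervalIntegral.integral_div] at key
  linarith

theorem integral_sq_add_damping_le (hu : ContDiff ℝ 2 ↿u) (ha : Continuous a)
    (hV : Continuous V) (hV_pos : ∀ x, 0 < V x) (ht : 0 ≤ t)
    (hPDE : ∀ s ∈ Ioc 0 t, ∀ x, utt u s x - uxx u s x + V x * u s x + a x * ut u s x = 0)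
    {R : ℝ} (hR : ∀ s ∈ Icc 0 t, ∀ x, R ≤ |x| → u s x = 0)
    (hf : Integrable fun x => (ut u 0 x + a x * u 0 x) ^ 2 / V x) :
    (1 / 2) * (∫ x, u t x ^ 2) + ∫ s in Icc 0 t, ∫ x, a x * u s x ^ 2 ≤
      (1 / 2) * (∫ x, u 0 x ^ 2) + (1 / 2) * ∫ x, (ut u 0 x + a x * u 0 x) ^ 2 / V x := by
  have cu : Continuous ↿u := hu.continuous
  set r := max R 0
  have hr : ∀ s ∈ Icc 0 t, ∀ x, r ≤ |x| → u s x = 0 := fun s hs x hx =>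
    hR s hs x ((le_max_left _ _).trans hx)
  have hsq : ∀ s ∈ Icc 0 t, ∫ x, u s x ^ 2 = ∫ x in -r..r, u s x ^ 2 := fun s hs =>
    integral_eq_intervalIntegral_of_forall_le_abs fun x hx => by simp [hr s hs x hx]
  have hdamp : ∫ s in Icc 0 t, ∫ x, a x * u s x ^ 2 =
      ∫ x in -r..r, timePrimitive (fun s x => a x * u s x ^ 2) t x := by
    rw [integral_Icc_eq_integral_Ioc, ← intervalIntegral.integral_of_le ht]
    simp only [timePrimitive]
    rw [← intervalIntegral_intervalIntegral_swap_of_continuous (by fun_prop)]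
    exact intervalIntegral.integral_congr fun s hs => integral_eq_intervalIntegral_of_forall_le_abs
      fun x hx => by simp [hr s (uIcc_of_le ht ▸ hs) x hx]
  have hr_nonneg : 0 ≤ r := le_max_right _ _
  have hforce : ∫ x in -r..r, (ut u 0 x + a x * u 0 x) ^ 2 / V x ≤
      ∫ x, (ut u 0 x + a x * u 0 x) ^ 2 / V x := by
    rw [intervalIntegral.integral_of_le (neg_le_self hr_nonneg)]
    exact setIntegral_le_integral hf (ae_of_all _ fun x => div_nonneg (sq_nonneg _) (hV_pos x).le)
  have hstrip := intervalIntegral_sq_add_damping_le hu ha hV hV_pos ht hPDE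
    (fun s hs => hr s (Ioc_subset_Icc_self hs) _ (abs_neg r ▸ le_abs_self r))
    (fun s hs => hr s (Ioc_subset_Icc_self hs) _ (le_abs_self r)) (neg_le_self hr_nonneg)
  rw [hsq t ⟨ht, le_rfl⟩, hsq 0 ⟨le_rfl, ht⟩, hdamp]
  linarith

end DampedWave

theorem lemma_2_5_general
    (a V : ℝ → ℝ) (u : ℝ → ℝ → ℝ) (u₀ u₁ : ℝ → ℝ)
    (ha_cont : Continuous a) (ha_nonneg : ∀ x, 0 ≤ a x)
    (hV : ContDiff ℝ 1 V) (hV_pos : ∀ x, 0 < V x)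
    (hsol : IsSmoothSolution V a u u₀ u₁) :
    ∀ t ≥ (0:ℝ),
      (1/2) * (∫ x, (u t x) ^ 2)
          + (∫ s in Set.Icc (0:ℝ) t, ∫ x, a x * (u s x) ^ 2) ≤
        (1/2) * (∫ x, u₀ x ^ 2) + (∫ x, (u₁ x + a x * u₀ x) ^ 2 / V x) ∧
      (∫ x, (u t x) ^ 2)
          + (∫ s in Set.Icc (0:ℝ) t, ∫ x, a x * (u s x) ^ 2) ≤
        2 * ((∫ x, u₀ x ^ 2) + ∫ x, (u₁ x + a x * u₀ x) ^ 2 / V x) := by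
  obtain ⟨hu, hPDE, hu0, hu1, hu₀_smooth, hu₀c, hu₁_smooth, hu₁c, hsupp⟩ := hsol
  intro t ht
  obtain ⟨R, -, hR⟩ := hsupp (t + 1) (by linarith)
  have hforce : Integrable fun x => (u₁ x + a x * u₀ x) ^ 2 / V x := by
    refine Continuous.integrable_of_hasCompactSupport
      (by fun_prop (disch := exact fun x => (hV_pos x).ne')) ?_
    exact (hu₁c.add (hu₀c.mul_left (f := a))).mono fun x hx h => hx (by
      simp only [Pi.add_apply, Pi.mul_apply] at h; simp [h])
  have key := integral_sq_add_damping_le (hu.of_le (by norm_cast)) ha_cont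
    hV.continuous hV_pos ht (fun s hs x => hPDE s hs.1 x)
    (fun s hs => hR s ⟨hs.1, by linarith [hs.2]⟩) (by simpa only [hu0, hu1] using hforce)
  simp only [hu0, hu1] at key
  have hdamp : 0 ≤ ∫ s in Icc 0 t, ∫ x, a x * u s x ^ 2 :=
    setIntegral_nonneg measurableSet_Icc fun s _ =>
      integral_nonneg fun x => mul_nonneg (ha_nonneg x) (sq_nonneg _)
  have hu₀_sq : 0 ≤ ∫ x, u₀ x ^ 2 := integral_nonneg fun x => sq_nonneg _
  have hforce_nonneg : 0 ≤ ∫ x, (u₁ x + a x * u₀ x) ^ 2 / V x :=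
    integral_nonneg fun x => div_nonneg (sq_nonneg _) (hV_pos x).le
  exact ⟨by linarith, by linarith⟩

/-- **Lemma 2.5.** Under (A.1) and (V.1), every smooth classical solution `u` of
`u_tt − u_xx + V u + a u_t = 0` with smooth compactly supported data `(u₀, u₁)`,
vanishing for large `|x|` on each `[0,T]`, satisfies for every `t ≥ 0`:
`(1/2)‖u(t,·)‖² + ∫₀ᵗ ∫ a u² dx ds ≤ (1/2)‖u₀‖² + ∫ (u₁ + a u₀)²/V dx`, and in
particular `‖u(t,·)‖² + ∫₀ᵗ ∫ a u² dx ds ≤ 2 (‖u₀‖² + ∫ (u₁ + a u₀)²/V dx)`. -/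
theorem lemma_2_5
    (a V : ℝ → ℝ) (u : ℝ → ℝ → ℝ) (u₀ u₁ : ℝ → ℝ)
    (ha_cont : Continuous a) (ha_bdd : ∃ M, ∀ x, |a x| ≤ M) (ha_nonneg : ∀ x, 0 ≤ a x)
    (hV : ContDiff ℝ 1 V) (hV_bdd : ∃ M, ∀ x, |V x| ≤ M)
    (hV'_bdd : ∃ M, ∀ x, |deriv V x| ≤ M) (hV_pos : ∀ x, 0 < V x)
    (hsol : IsSmoothSolution V a u u₀ u₁) :
    ∀ t ≥ (0:ℝ),
      (1/2) * (∫ x, (u t x) ^ 2)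
          + (∫ s in Set.Icc (0:ℝ) t, ∫ x, a x * (u s x) ^ 2) ≤
        (1/2) * (∫ x, u₀ x ^ 2) + (∫ x, (u₁ x + a x * u₀ x) ^ 2 / V x) ∧
      (∫ x, (u t x) ^ 2)
          + (∫ s in Set.Icc (0:ℝ) t, ∫ x, a x * (u s x) ^ 2) ≤
        2 * ((∫ x, u₀ x ^ 2) + ∫ x, (u₁ x + a x * u₀ x) ^ 2 / V x) :=
  lemma_2_5_general a V u u₀ u₁ ha_cont ha_nonneg hV hV_pos hsol
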